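/- arXiv:1708.03045 — 2 statements merged into one kernel-verified Lean document; each statement's English description precedes it below -/
import Mathlib

section
/- Let n ≥ 7 and p > n/(n-6), and set m = 6/(p-1) and L = (m(m+2)(m+4)(n-2-m)(n-4-m)(n-6-m))^{1/(p-1)}. Then 0 < m < n-6, and the function u(x) = L|x|^{-m} satisfies (-Δ)³u = u^p on ℝⁿ \ {0}. -/
/-! Each application of `-Δ` to `c r^{-k}` multiplies it by `k (n - 2 - k)` and lowers the
exponent by two, so three applications to `L r^{-m}` give `L K r^{-m-6}` where `K` is the
product in the definition of `L`. Since `m p = m + 6` and `L^{p-1} = K`, this is `(L r^{-m})^p`. -/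

/-- Radial Laplacian in `ℝⁿ`: `Δf(r) = f''(r) + ((n-1)/r) f'(r)`. -/
noncomputable def radialLaplacian (n : ℕ) (f : ℝ → ℝ) (r : ℝ) : ℝ :=
  deriv (deriv f) r + ((n : ℝ) - 1) / r * deriv f r

open Set Filter Topology

lemma radialLaplacian_congr {n : ℕ} {f g : ℝ → ℝ} {r : ℝ} (h : f =ᶠ[𝓝 r] g) :
    radialLaplacian n f r = radialLaplacian n g r := by
  unfold radialLaplacian
  rw [h.deriv.deriv.eq_of_nhds, h.deriv.eq_of_nhds]

lemma radialLaplacian_const_mul_rpow (n : ℕ) (c a : ℝ) {r : ℝ} (hr : r ≠ 0) :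
    radialLaplacian n (fun ρ => c * ρ ^ a) r = c * a * (a + n - 2) * r ^ (a - 2) := by
  have hderiv : deriv (fun ρ => c * ρ ^ a) = fun ρ => c * a * ρ ^ (a - 1) := by
    funext ρ
    rw [deriv_const_mul_field, Real.deriv_rpow_const, mul_assoc]
  have hderiv2 : deriv (deriv fun ρ => c * ρ ^ a) r = c * a * (a - 1) * r ^ (a - 2) := by
    rw [hderiv, deriv_const_mul_field, Real.deriv_rpow_const, sub_sub, one_add_one_eq_two]
    ring
  have hpow : r ^ (a - 1) = r ^ (a - 2) * r := by
    rw [← Real.rpow_add_one hr]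
    ring_nf
  unfold radialLaplacian
  rw [hderiv2, hderiv]
  dsimp only
  rw [hpow]
  field_simp
  ring

lemma neg_radialLaplacian_of_eqOn_rpow_neg {n : ℕ} {f : ℝ → ℝ} {c k r : ℝ}
    (hf : EqOn f (fun ρ => c * ρ ^ (-k)) (Ioi 0)) (hr : 0 < r) :
    -radialLaplacian n f r = c * (k * (n - 2 - k)) * r ^ (-(k + 2)) := by
  rw [radialLaplacian_congr (hf.eventuallyEq_of_mem (Ioi_mem_nhds hr)),
    radialLaplacian_const_mul_rpow n c (-k) hr.ne', neg_sub_left, add_comm 2 k]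
  ring

lemma neg_radialLaplacian_iterate_three_rpow_neg (n : ℕ) (L m : ℝ) {r : ℝ} (hr : 0 < r) :
    -radialLaplacian n
        (fun s => -radialLaplacian n
          (fun t => -radialLaplacian n (fun ρ => L * ρ ^ (-m)) t) s) r
      = L * (m * (m + 2) * (m + 4) * (n - 2 - m) * (n - 4 - m) * (n - 6 - m)) *
          r ^ (-(m + 6)) := by
  have h1 : EqOn (fun t => -radialLaplacian n (fun ρ => L * ρ ^ (-m)) t)
      (fun t => L * (m * (n - 2 - m)) * t ^ (-(m + 2))) (Ioi 0) :=
    fun t ht => neg_radialLaplacian_of_eqOn_rpow_neg (fun _ _ => rfl) ht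
  have h2 : EqOn (fun s => -radialLaplacian n
        (fun t => -radialLaplacian n (fun ρ => L * ρ ^ (-m)) t) s)
      (fun s => L * (m * (n - 2 - m)) * ((m + 2) * (n - 2 - (m + 2))) * s ^ (-(m + 2 + 2)))
      (Ioi 0) :=
    fun s hs => neg_radialLaplacian_of_eqOn_rpow_neg h1 hs
  rw [neg_radialLaplacian_of_eqOn_rpow_neg h2 hr, show m + 2 + 2 + 2 = m + 6 by ring]
  ring

lemma one_lt_of_div_sub_six_lt {N p : ℝ} (hN : 6 < N) (hp : N / (N - 6) < p) : 1 < p := by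
  have : 1 < N / (N - 6) := by
    rw [one_lt_div (by linarith)]
    linarith
  linarith

lemma six_div_sub_one_mem_Ioo {N p : ℝ} (hN : 6 < N) (hp : N / (N - 6) < p) :
    6 / (p - 1) ∈ Ioo 0 (N - 6) := by
  have hp1 : 0 < p - 1 := by linarith [one_lt_of_div_sub_six_lt hN hp]
  refine ⟨by positivity, ?_⟩
  rw [div_lt_iff₀ hp1]
  have := (div_lt_iff₀ (by linarith : 0 < N - 6)).mp hp
  nlinarith

lemma rpow_one_div_sub_one_rpow {K p : ℝ} (hK : 0 < K) (hp : p ≠ 1) :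
    (K ^ (1 / (p - 1))) ^ p = K ^ (1 / (p - 1)) * K := by
  have hp1 : p - 1 ≠ 0 := sub_ne_zero.mpr hp
  rw [← Real.rpow_mul hK.le, ← Real.rpow_add_one hK.ne']
  congr 1
  field_simp
  ring

theorem stmt_1 (n : ℕ) (hn : 7 ≤ n) (p : ℝ) (hp : (n : ℝ) / ((n : ℝ) - 6) < p)
    (m L : ℝ) (hm : m = 6 / (p - 1))
    (hL : L = (m * (m + 2) * (m + 4) * ((n : ℝ) - 2 - m) * ((n : ℝ) - 4 - m) *
      ((n : ℝ) - 6 - m)) ^ (1 / (p - 1))) :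
    (0 < m ∧ m < (n : ℝ) - 6) ∧
    ∀ r : ℝ, 0 < r →
      -radialLaplacian n
        (fun s => -radialLaplacian n
          (fun t => -radialLaplacian n (fun ρ => L * ρ ^ (-m)) t) s) r
        = (L * r ^ (-m)) ^ p := by
  have hN : (6 : ℝ) < n := by exact_mod_cast hn
  have hp1 : 1 < p := one_lt_of_div_sub_six_lt hN hp
  obtain ⟨hm0, hmn⟩ : 0 < m ∧ m < (n : ℝ) - 6 := hm ▸ six_div_sub_one_mem_Ioo hN hp
  refine ⟨⟨hm0, hmn⟩, fun r hr => ?_⟩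
  have hmp : -m * p = -(m + 6) := by
    have : p - 1 ≠ 0 := by linarith
    rw [hm]
    field_simp
    ring
  have hK : 0 < m * (m + 2) * (m + 4) * ((n : ℝ) - 2 - m) * ((n : ℝ) - 4 - m) *
      ((n : ℝ) - 6 - m) := by
    have : 0 < (n : ℝ) - 6 - m := by linarith
    have : 0 < (n : ℝ) - 4 - m := by linarith
    have : 0 < (n : ℝ) - 2 - m := by linarith
    positivity
  have hL0 : 0 ≤ L := hL ▸ by positivity
  rw [neg_radialLaplacian_iterate_three_rpow_neg n L m hr,
    Real.mul_rpow hL0 (Real.rpow_nonneg hr.le _), ← Real.rpow_mul hr.le, hmp, hL,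
    rpow_one_div_sub_one_rpow hK hp1.ne']
end

section
/- Let n ≥ 15, p > p_S := (n+6)/(n-6), m = 6/(p-1), L^{p-1} = m(m+2)(m+4)(n-2-m)(n-4-m)(n-6-m), and let l with m < l be a root of the characteristic equation l(l+2)(l+4)(n-2-l)(n-4-l)(n-6-l) = pL^{p-1}. Let b > 0 and set r₁ = (b/L)^{1/(l-m)}. Then for all r > r₁, (L r^{-m} - b r^{-l})^p ≥ L^p r^{-m-6} - p L^{p-1} b r^{-l-6}, and consequently the function w(r) = m(m+2)(n-2-m)(n-4-m) L r^{-m-4} - l(l+2)(n-2-l)(n-4-l) b r^{-l-4} satisfies -Δw ≤ (L r^{-m} - b r^{-l})^p for all r > r₁, where Δ is the radial Laplacian in ℝⁿ. -/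
lemma aux_hasDerivAt (A c : ℝ) {r : ℝ} (hr : r ≠ 0) :
    HasDerivAt (fun s : ℝ => A * s ^ c) (A * c * r ^ (c - 1)) r := by
  simpa [mul_assoc] using (Real.hasDerivAt_rpow_const (p := c) (Or.inl hr)).const_mul A

lemma aux_deriv (A B c d : ℝ) {r : ℝ} (hr : r ≠ 0) :
    deriv (fun s : ℝ => A * s ^ c - B * s ^ d) r
      = A * c * r ^ (c - 1) - B * d * r ^ (d - 1) :=
  ((aux_hasDerivAt A c hr).sub (aux_hasDerivAt B d hr)).deriv

lemma aux_deriv2 (A B c d : ℝ) {r : ℝ} (hr : r ≠ 0) :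
    deriv (deriv (fun s : ℝ => A * s ^ c - B * s ^ d)) r
      = A * c * (c - 1) * r ^ (c - 2) - B * d * (d - 1) * r ^ (d - 2) := by
  have hev : deriv (fun s : ℝ => A * s ^ c - B * s ^ d)
      =ᶠ[nhds r] fun x => A * c * x ^ (c - 1) - B * d * x ^ (d - 1) := by
    filter_upwards [eventually_ne_nhds hr] with x hx
    exact aux_deriv A B c d hx
  rw [hev.deriv_eq]
  have := aux_deriv (A * c) (B * d) (c - 1) (d - 1) hr
  rw [this]
  ring_nf

theorem stmt_9 (n : ℕ) (hn : 15 ≤ n) (p : ℝ)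
    (hp : ((n : ℝ) + 6) / ((n : ℝ) - 6) < p)
    (m L l b r₁ : ℝ) (hm : m = 6 / (p - 1)) (hL : 0 < L)
    (hLp : L ^ (p - 1) = m * (m + 2) * (m + 4) * ((n : ℝ) - 2 - m) *
      ((n : ℝ) - 4 - m) * ((n : ℝ) - 6 - m))
    (hml : m < l)
    (hlroot : l * (l + 2) * (l + 4) * ((n : ℝ) - 2 - l) * ((n : ℝ) - 4 - l) *
      ((n : ℝ) - 6 - l) = p * L ^ (p - 1))
    (hb : 0 < b) (hr₁ : r₁ = (b / L) ^ (1 / (l - m))) :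
    ∀ r : ℝ, r₁ < r →
      (L * r ^ (-m) - b * r ^ (-l)) ^ p
        ≥ L ^ p * r ^ (-m - 6) - p * L ^ (p - 1) * b * r ^ (-l - 6) ∧
      -radialLaplacian n
        (fun s => m * (m + 2) * ((n : ℝ) - 2 - m) * ((n : ℝ) - 4 - m) * L * s ^ (-m - 4)
          - l * (l + 2) * ((n : ℝ) - 2 - l) * ((n : ℝ) - 4 - l) * b * s ^ (-l - 4)) r
        ≤ (L * r ^ (-m) - b * r ^ (-l)) ^ p := by
  have hn6 : (6 : ℝ) < (n : ℝ) := by exact_mod_cast (by omega : 6 < n)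
  have hp1 : 1 < p := by
    refine lt_trans ?_ hp
    rw [lt_div_iff₀ (by linarith)]; linarith
  have hm0 : 0 < m := by rw [hm]; exact div_pos (by norm_num) (by linarith)
  have hmp : m * (p - 1) = 6 := by
    rw [hm, div_mul_cancel₀]; linarith
  have hlm : 0 < l - m := sub_pos.mpr hml
  have hbL : 0 < b / L := div_pos hb hL
  have hr₁0 : 0 < r₁ := hr₁ ▸ Real.rpow_pos_of_pos hbL _
  intro r hr
  have hr0 : 0 < r := hr₁0.trans hr
  set z : ℝ := (b / L) * r ^ (m - l) with hzdef
  have hz0 : 0 < z := mul_pos hbL (Real.rpow_pos_of_pos hr0 _)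
  have hrlm : b / L < r ^ (l - m) := by
    have h1 : r₁ ^ (l - m) = b / L := by
      rw [hr₁, ← Real.rpow_mul hbL.le, one_div, inv_mul_cancel₀ hlm.ne', Real.rpow_one]
    calc b / L = r₁ ^ (l - m) := h1.symm
      _ < r ^ (l - m) := Real.rpow_lt_rpow hr₁0.le hr hlm
  have hz1 : z < 1 := by
    have : r ^ (m - l) = (r ^ (l - m))⁻¹ := by
      rw [← Real.rpow_neg hr0.le]; ring_nf
    rw [hzdef, this, mul_inv_lt_iff₀ (Real.rpow_pos_of_pos hr0 _), one_mul]
    exact hrlm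
  -- factorization
  have hrml : r ^ (-m) * r ^ (m - l) = r ^ (-l) := by
    rw [← Real.rpow_add hr0]; ring_nf
  have key : L * r ^ (-m) - b * r ^ (-l) = L * r ^ (-m) * (1 - z) := by
    rw [hzdef]
    have : L * r ^ (-m) * ((b / L) * r ^ (m - l))
        = b * (r ^ (-m) * r ^ (m - l)) := by field_simp
    rw [mul_sub, mul_one, this, hrml]
  have hx : (0 : ℝ) < L * r ^ (-m) := mul_pos hL (Real.rpow_pos_of_pos hr0 _)
  have hmp6 : m * p = m + 6 := by linear_combination hmp
  have hxp : (L * r ^ (-m)) ^ p = L ^ p * r ^ (-m - 6) := by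
    rw [Real.mul_rpow hL.le (Real.rpow_nonneg hr0.le _), ← Real.rpow_mul hr0.le]
    rw [show -m * p = -m - 6 by linarith [hmp6]]
  have hLpL : L ^ p = L ^ (p - 1) * L := by
    have h := Real.rpow_add_one hL.ne' (p - 1)
    rw [show p - 1 + 1 = p by ring] at h
    exact h
  have h2 : L ^ p * r ^ (-m - 6) * z = L ^ (p - 1) * b * r ^ (-l - 6) := by
    have hre : r ^ (-m - 6) * r ^ (m - l) = r ^ (-l - 6) := by
      rw [← Real.rpow_add hr0]; ring_nf
    have hstep : L ^ (p - 1) * L * r ^ (-m - 6) * (b / L * r ^ (m - l))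
        = L ^ (p - 1) * b * (r ^ (-m - 6) * r ^ (m - l)) := by
      field_simp
    rw [hzdef, hLpL, hstep, hre]
  have hBern : 1 - p * z ≤ (1 - z) ^ p := by
    have := one_add_mul_self_le_rpow_one_add (s := -z) (by linarith) hp1.le
    have e : (1 : ℝ) + -z = 1 - z := by ring
    rw [e] at this
    linarith
  have part1 : L ^ p * r ^ (-m - 6) - p * L ^ (p - 1) * b * r ^ (-l - 6)
      ≤ (L * r ^ (-m) - b * r ^ (-l)) ^ p := by
    rw [key, Real.mul_rpow hx.le (by linarith : (0:ℝ) ≤ 1 - z), hxp]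
    calc L ^ p * r ^ (-m - 6) - p * L ^ (p - 1) * b * r ^ (-l - 6)
        = L ^ p * r ^ (-m - 6) * (1 - p * z) := by
          rw [mul_sub, mul_one]
          have : L ^ p * r ^ (-m - 6) * (p * z) = p * (L ^ (p-1) * b * r ^ (-l - 6)) := by
            rw [← h2]; ring
          rw [this]; ring
      _ ≤ L ^ p * r ^ (-m - 6) * (1 - z) ^ p := by
          apply mul_le_mul_of_nonneg_left hBern
          positivity
  refine ⟨part1, ?_⟩
  -- Laplacian part
  set A : ℝ := m * (m + 2) * ((n : ℝ) - 2 - m) * ((n : ℝ) - 4 - m) * L with hA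
  set B : ℝ := l * (l + 2) * ((n : ℝ) - 2 - l) * ((n : ℝ) - 4 - l) * b with hB
  have hd1 := aux_deriv A B (-m - 4) (-l - 4) hr0.ne'
  have hd2 := aux_deriv2 A B (-m - 4) (-l - 4) hr0.ne'
  have hrc : r ^ (-m - 4 - 1) = r ^ (-m - 4 - 2) * r := by
    rw [← Real.rpow_add_one hr0.ne']; ring_nf
  have hrd : r ^ (-l - 4 - 1) = r ^ (-l - 4 - 2) * r := by
    rw [← Real.rpow_add_one hr0.ne']; ring_nf
  have hlap : -radialLaplacian n
      (fun s => A * s ^ (-m - 4) - B * s ^ (-l - 4)) r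
      = A * (m + 4) * ((n : ℝ) - 6 - m) * r ^ (-m - 4 - 2)
        - B * (l + 4) * ((n : ℝ) - 6 - l) * r ^ (-l - 4 - 2) := by
    rw [radialLaplacian, hd1, hd2, hrc, hrd]
    field_simp
    ring
  have hc2 : r ^ (-m - 4 - 2) = r ^ (-m - 6) := by congr 1; ring
  have hd2' : r ^ (-l - 4 - 2) = r ^ (-l - 6) := by congr 1; ring
  have hAc : A * (m + 4) * ((n : ℝ) - 6 - m) = L ^ p := by
    rw [hA, hLpL]; linear_combination (-L) * hLp
  have hBc : B * (l + 4) * ((n : ℝ) - 6 - l) = p * L ^ (p - 1) * b := by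
    rw [hB]; linear_combination b * hlroot
  calc -radialLaplacian n
        (fun s => m * (m + 2) * ((n : ℝ) - 2 - m) * ((n : ℝ) - 4 - m) * L * s ^ (-m - 4)
          - l * (l + 2) * ((n : ℝ) - 2 - l) * ((n : ℝ) - 4 - l) * b * s ^ (-l - 4)) r
      = L ^ p * r ^ (-m - 6) - p * L ^ (p - 1) * b * r ^ (-l - 6) := by
        rw [show (fun s : ℝ => m * (m + 2) * ((n : ℝ) - 2 - m) * ((n : ℝ) - 4 - m) * L * s ^ (-m - 4)
          - l * (l + 2) * ((n : ℝ) - 2 - l) * ((n : ℝ) - 4 - l) * b * s ^ (-l - 4))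
          = fun s : ℝ => A * s ^ (-m - 4) - B * s ^ (-l - 4) from rfl]
        rw [hlap, hc2, hd2', hAc, hBc]
    _ ≤ (L * r ^ (-m) - b * r ^ (-l)) ^ p := part1
end
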